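/- Computable inversion of a computable injection on a computable closed set: let P : 2^{<ω} → Bool be computable and downward closed under prefixes (a computable tree), with path set [P] = {x ∈ 2^ω : ∀ n, P(x↾n)} nonempty. Let f̂ : 2^{<ω} → 2^{<ω} be computable, monotone (σ ⪯ τ implies f̂(σ) ⪯ f̂(τ)), with |f̂(σ)| ≤ |σ|, and such that for every x ∈ [P] the lengths |f̂(x↾n)| tend to infinity; let f(x) ∈ 2^ω denote the real ⋃_n f̂(x↾n) for x ∈ [P]. Assume f is injective on [P]. Then there exists a computable ĝ : 2^{<ω} → 2^{<ω} such that for every x ∈ [P]: ĝ(f(x)↾s) is a prefix of x for every s, and |ĝ(f(x)↾s)| tends to infinity with s; hence the induced map g satisfies g(f(x)) = x for all x ∈ [P]. -/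

import Mathlib

open Filter

/-- The length-`n` prefix of a real `x : ℕ → Bool`, as a finite binary string. -/
def pre (x : ℕ → Bool) (n : ℕ) : List Bool := (List.range n).map x

namespace CIOTaux

/-! ### basic list lemmas -/

lemma prefix_iff_getElem? {l₁ l₂ : List Bool} :
    l₁ <+: l₂ ↔ l₁.length ≤ l₂.length ∧ ∀ i < l₁.length, l₂[i]? = l₁[i]? := by
  constructor
  · rintro ⟨t, rfl⟩
    refine ⟨by simp, fun i hi => ?_⟩
    simp [List.getElem?_append, hi]
  · rintro ⟨hlen, h⟩
    rw [List.prefix_iff_eq_take]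
    apply List.ext_getElem?
    intro i
    by_cases hi : i < l₁.length
    · rw [List.getElem?_take, if_pos hi, h i hi]
    · rw [List.getElem?_take, if_neg hi, List.getElem?_eq_none (le_of_not_gt hi)]

/-! ### pre lemmas -/

lemma pre_length (x : ℕ → Bool) (n : ℕ) : (pre x n).length = n := by simp [pre]

lemma pre_getElem? {x : ℕ → Bool} {n i : ℕ} (h : i < n) : (pre x n)[i]? = some (x i) := by
  simp [pre, List.getElem?_range h]

lemma pre_prefix_of_le {x : ℕ → Bool} {m n : ℕ} (h : m ≤ n) : pre x m <+: pre x n := by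
  rw [prefix_iff_getElem?]
  refine ⟨by simp [pre_length, h], fun i hi => ?_⟩
  rw [pre_length] at hi
  rw [pre_getElem? hi, pre_getElem? (lt_of_lt_of_le hi h)]

lemma eq_pre_of_prefix {x : ℕ → Bool} {n : ℕ} {μ : List Bool} (h : μ <+: pre x n) :
    μ = pre x μ.length := by
  have hlen : μ.length ≤ n := by
    have := h.length_le; rwa [pre_length] at this
  apply List.ext_getElem?
  intro i
  by_cases hi : i < μ.length
  · rw [pre_getElem? hi, ← (prefix_iff_getElem?.1 h).2 i hi, pre_getElem? (lt_of_lt_of_le hi hlen)]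
  · rw [List.getElem?_eq_none (le_of_not_gt hi),
      List.getElem?_eq_none (by rw [pre_length]; exact le_of_not_gt hi)]

lemma pre_point_eq {z x : ℕ → Bool} {m i : ℕ} (h : pre z m = pre x m) (hi : i < m) :
    z i = x i := by
  have := congrArg (fun l => l[i]?) h
  simp only [pre_getElem? hi] at this
  exact Option.some.inj this

lemma pre_take {x : ℕ → Bool} {k N : ℕ} (h : k ≤ N) : (pre x N).take k = pre x k := by
  apply List.ext_getElem?
  intro i
  by_cases hi : i < k
  · rw [List.getElem?_take, if_pos hi, pre_getElem? hi, pre_getElem? (lt_of_lt_of_le hi h)]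
  · rw [List.getElem?_take, if_neg hi,
      List.getElem?_eq_none (by rw [pre_length]; exact le_of_not_gt hi)]

lemma pre_ofExt {τ : List Bool} {k : ℕ} (h : k ≤ τ.length) :
    pre (fun i => τ.getD i false) k = τ.take k := by
  apply List.ext_getElem?
  intro i
  by_cases hi : i < k
  · rw [pre_getElem? hi, List.getElem?_take, if_pos hi,
      List.getD_eq_getElem τ false (lt_of_lt_of_le hi h),
      List.getElem?_eq_getElem (lt_of_lt_of_le hi h)]
  · rw [List.getElem?_eq_none (by rw [pre_length]; exact le_of_not_gt hi),
      List.getElem?_take, if_neg hi]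

/-! ### lcpAll -/

def agreeAt (l : List (List Bool)) (i : ℕ) : Bool :=
  (l.headI[i]?).isSome &&
    decide ((l.filterMap fun τ => if τ[i]? = l.headI[i]? then none else some τ) = [])

def badIdx (l : List (List Bool)) : ℕ :=
  List.findIdx (fun i => bif agreeAt l i then false else true) (List.range (l.headI.length + 1))

def lcpAll (l : List (List Bool)) : List Bool :=
  (List.range (badIdx l)).map fun i => l.headI.getD i false

lemma agreeAt_iff {l : List (List Bool)} {i : ℕ} :
    agreeAt l i = true ↔ (l.headI[i]?).isSome = true ∧ ∀ τ ∈ l, τ[i]? = l.headI[i]? := by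
  simp only [agreeAt, Bool.and_eq_true, decide_eq_true_eq, List.filterMap_eq_nil_iff]
  constructor
  · rintro ⟨h1, h2⟩
    refine ⟨h1, fun τ hτ => ?_⟩
    have := h2 τ hτ
    by_cases hc : τ[i]? = l.headI[i]?
    · exact hc
    · simp [hc] at this
  · rintro ⟨h1, h2⟩
    exact ⟨h1, fun τ hτ => by simp [h2 τ hτ]⟩

lemma agreeAt_of_lt_badIdx {l : List (List Bool)} {i : ℕ} (h : i < badIdx l) :
    agreeAt l i = true := by
  have hle : badIdx l ≤ l.headI.length + 1 := by
    have := List.findIdx_le_length (p := fun i => bif agreeAt l i then false else true)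
      (xs := List.range (l.headI.length + 1))
    rwa [List.length_range] at this
  have hi : i < (List.range (l.headI.length + 1)).length := by
    rw [List.length_range]; exact lt_of_lt_of_le h hle
  have := List.not_of_lt_findIdx (p := fun i => bif agreeAt l i then false else true)
    (xs := List.range (l.headI.length + 1)) (i := i) h
  rw [List.getElem_range] at this
  revert this
  cases agreeAt l i <;> simp

lemma badIdx_le {l : List (List Bool)} : badIdx l ≤ l.headI.length := by
  have : badIdx l < (List.range (l.headI.length + 1)).length := by
    apply List.findIdx_lt_length_of_exists
    refine ⟨l.headI.length, List.mem_range.2 (Nat.lt_succ_self _), ?_⟩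
    have : agreeAt l l.headI.length = false := by
      simp [agreeAt, List.getElem?_eq_none (le_refl l.headI.length)]
    simp [this]
  rwa [List.length_range, Nat.lt_succ_iff] at this

lemma le_badIdx {l : List (List Bool)} {k : ℕ} (hk : k ≤ l.headI.length)
    (h : ∀ i < k, agreeAt l i = true) : k ≤ badIdx l := by
  by_contra hc
  push_neg at hc
  have hw : badIdx l < (List.range (l.headI.length + 1)).length := by
    rw [List.length_range]; exact lt_of_lt_of_le hc (le_trans hk (Nat.le_succ _))
  have := List.findIdx_getElem (p := fun i => bif agreeAt l i then false else true)
    (xs := List.range (l.headI.length + 1)) (w := hw)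
  erw [List.getElem_range] at this
  have h2 := h (badIdx l) hc
  have hb : List.findIdx (fun i => bif agreeAt l i then false else true)
      (List.range (l.headI.length + 1)) = badIdx l := rfl
  rw [hb, h2] at this
  simp at this

lemma lcpAll_length {l : List (List Bool)} : (lcpAll l).length = badIdx l := by
  simp [lcpAll]

lemma lcpAll_getElem? {l : List (List Bool)} {i : ℕ} (h : i < badIdx l) :
    (lcpAll l)[i]? = l.headI[i]? := by
  have hag := agreeAt_iff.1 (agreeAt_of_lt_badIdx h)
  obtain ⟨b, hb⟩ := Option.isSome_iff_exists.1 hag.1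
  have : (lcpAll l)[i]? = some (l.headI.getD i false) := by
    simp [lcpAll, List.getElem?_range h]
  rw [this, hb, List.getD_eq_getElem?_getD, hb]
  rfl

lemma lcpAll_prefix {l : List (List Bool)} {τ : List Bool} (hτ : τ ∈ l) : lcpAll l <+: τ := by
  have hlen : badIdx l ≤ τ.length := by
    by_contra hc
    push_neg at hc
    have hag := agreeAt_iff.1 (agreeAt_of_lt_badIdx hc)
    have := hag.2 τ hτ
    rw [List.getElem?_eq_none (le_refl τ.length)] at this
    rw [← this] at hag
    simp at hag
  rw [prefix_iff_getElem?]
  refine ⟨by rw [lcpAll_length]; exact hlen, fun i hi => ?_⟩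
  rw [lcpAll_length] at hi
  rw [lcpAll_getElem? hi]
  exact (agreeAt_iff.1 (agreeAt_of_lt_badIdx hi)).2 τ hτ

lemma prefix_lcpAll {l : List (List Bool)} {η : List Bool} (hl : l ≠ [])
    (hη : ∀ τ ∈ l, η <+: τ) : η <+: lcpAll l := by
  have hhead : l.headI ∈ l := by
    cases l with
    | nil => exact absurd rfl hl
    | cons a t => exact List.mem_cons_self
  have hh : η <+: l.headI := hη _ hhead
  have hhl : η.length ≤ l.headI.length := hh.length_le
  have hag : ∀ i < η.length, agreeAt l i = true := by
    intro i hi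
    rw [agreeAt_iff]
    constructor
    · rw [(prefix_iff_getElem?.1 hh).2 i hi, List.getElem?_eq_getElem hi]
      simp
    · intro τ hτ
      rw [(prefix_iff_getElem?.1 (hη τ hτ)).2 i hi, (prefix_iff_getElem?.1 hh).2 i hi]
  have hbl : η.length ≤ badIdx l := le_badIdx hhl hag
  rw [prefix_iff_getElem?]
  refine ⟨by rw [lcpAll_length]; exact hbl, fun i hi => ?_⟩
  rw [lcpAll_getElem? (lt_of_lt_of_le hi hbl), (prefix_iff_getElem?.1 hh).2 i hi]

/-! ### enum -/

def enum : ℕ → List (List Bool)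
  | 0 => [[]]
  | n + 1 => (enum n).flatMap fun τ => [false :: τ, true :: τ]

lemma mem_enum {n : ℕ} {τ : List Bool} : τ ∈ enum n ↔ τ.length = n := by
  induction n generalizing τ with
  | zero => simp [enum, List.length_eq_zero_iff]
  | succ n ih =>
    simp only [enum, List.mem_flatMap, ih]
    constructor
    · rintro ⟨a, ha, hτ⟩
      simp only [List.mem_cons, List.mem_singleton, List.not_mem_nil, or_false] at hτ
      rcases hτ with h | h <;> subst h <;> simp [ha]
    · intro h
      cases τ with
      | nil => simp at h
      | cons b t =>
        refine ⟨t, ?_, ?_⟩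
        · simpa using h
        · cases b <;> simp

lemma enum_eq_rec (n : ℕ) :
    enum n = Nat.rec [[]] (fun _ IH => IH.flatMap fun τ => [false :: τ, true :: τ]) n := by
  induction n with
  | zero => rfl
  | succ n ih =>
    rw [enum, ih]

-- computability section
lemma primrec_enum : Primrec enum := by
  have hstep : Primrec₂ (fun (_ : ℕ) (p : ℕ × List (List Bool)) =>
      p.2.flatMap fun τ => [false :: τ, true :: τ]) := by
    exact Primrec.to₂ <| Primrec.list_flatMap (Primrec.snd.comp Primrec.snd)
      (Primrec.to₂ (Primrec.list_cons.comp
        (Primrec.list_cons.comp (Primrec.const false) Primrec.snd)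
        (Primrec.list_cons.comp
          (Primrec.list_cons.comp (Primrec.const true) Primrec.snd)
          (Primrec.const []))))
  have h := (Primrec.nat_rec (Primrec.const [[]]) hstep).comp Primrec.id Primrec.id
  refine h.of_eq fun n => ?_
  simp only [id_eq]
  exact (enum_eq_rec n).symm

lemma primrec₂_agreeAt : Primrec₂ agreeAt := by
  have hheadget : Primrec fun p : List (List Bool) × ℕ => p.1.headI[p.2]? :=
    Primrec.list_getElem?.comp (Primrec.list_headI.comp Primrec.fst) Primrec.snd
  have h1 : Primrec fun p : List (List Bool) × ℕ => (p.1.headI[p.2]?).isSome :=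
    Primrec.option_isSome.comp hheadget
  have hc : PrimrecPred fun q : (List (List Bool) × ℕ) × List Bool =>
      q.2[q.1.2]? = q.1.1.headI[q.1.2]? :=
    Primrec.eq.comp (Primrec.list_getElem?.comp Primrec.snd (Primrec.snd.comp Primrec.fst))
      (Primrec.list_getElem?.comp (Primrec.list_headI.comp (Primrec.fst.comp Primrec.fst))
        (Primrec.snd.comp Primrec.fst))
  have hfm : Primrec fun p : List (List Bool) × ℕ =>
      p.1.filterMap fun τ => if τ[p.2]? = p.1.headI[p.2]? then none else some τ :=
    Primrec.listFilterMap Primrec.fst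
      (Primrec.to₂ (Primrec.ite hc (Primrec.const none) (Primrec.option_some.comp Primrec.snd)))
  have h2 : Primrec fun p : List (List Bool) × ℕ =>
      decide ((p.1.filterMap fun τ => if τ[p.2]? = p.1.headI[p.2]? then none
        else some τ) = []) := (Primrec.eq.comp hfm (Primrec.const [])).decide
  have hfinal : Primrec fun p : List (List Bool) × ℕ => agreeAt p.1 p.2 := by
    refine (Primrec.cond h1 h2 (Primrec.const false)).of_eq fun p => ?_
    simp only [agreeAt]
    cases (p.1.headI[p.2]?).isSome <;> simp
  exact Primrec.to₂ hfinal

lemma primrec_badIdx : Primrec badIdx := by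
  have hp : Primrec₂ fun (l : List (List Bool)) (i : ℕ) =>
      bif agreeAt l i then false else true :=
    Primrec.to₂ (Primrec.cond primrec₂_agreeAt (Primrec.const false) (Primrec.const true))
  exact Primrec.list_findIdx
    (Primrec.list_range.comp (Primrec.succ.comp (Primrec.list_length.comp Primrec.list_headI))) hp

lemma primrec_lcpAll : Primrec lcpAll :=
  Primrec.list_map (Primrec.list_range.comp primrec_badIdx)
    (Primrec.to₂ ((Primrec.list_getD false).comp (Primrec.list_headI.comp Primrec.fst)
      Primrec.snd))

lemma prefix_iff_map_range {σ τ : List Bool} :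
    σ <+: τ ↔ σ = (List.range (min σ.length τ.length)).map fun i => τ.getD i false := by
  constructor
  · intro h
    have hlen : σ.length ≤ τ.length := h.length_le
    rw [min_eq_left hlen]
    apply List.ext_getElem?
    intro i
    by_cases hi : i < σ.length
    · rw [List.getElem?_map, List.getElem?_range hi, ← (prefix_iff_getElem?.1 h).2 i hi]
      simp [List.getD_eq_getElem τ false (lt_of_lt_of_le hi hlen),
        List.getElem?_eq_getElem (lt_of_lt_of_le hi hlen)]
    · rw [List.getElem?_eq_none (le_of_not_gt hi),
        List.getElem?_eq_none (by simpa using le_of_not_gt hi)]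
  · intro h
    have hlen : σ.length ≤ τ.length := by
      have := congrArg List.length h
      simp at this
      omega
    rw [prefix_iff_getElem?]
    refine ⟨hlen, fun i hi => ?_⟩
    conv_rhs => rw [h]
    rw [List.getElem?_map, min_eq_left hlen, List.getElem?_range hi]
    simp [List.getD_eq_getElem τ false (lt_of_lt_of_le hi hlen),
      List.getElem?_eq_getElem (lt_of_lt_of_le hi hlen)]

lemma primrec₂_isPrefixOf : Primrec₂ fun σ τ : List Bool => σ.isPrefixOf τ := by
  have h : Primrec fun p : List Bool × List Bool =>
      decide (p.1 = (List.range (min p.1.length p.2.length)).map fun i => p.2.getD i false) :=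
    (Primrec.eq.comp Primrec.fst
      (Primrec.list_map
        (Primrec.list_range.comp (Primrec.nat_min.comp
          (Primrec.list_length.comp Primrec.fst) (Primrec.list_length.comp Primrec.snd)))
        (Primrec.to₂ ((Primrec.list_getD false).comp (Primrec.snd.comp Primrec.fst)
          Primrec.snd)))).decide
  have hfinal : Primrec fun p : List Bool × List Bool => p.1.isPrefixOf p.2 := by
    refine h.of_eq fun p => ?_
    by_cases hp : p.1 <+: p.2
    · have h1 : p.1.isPrefixOf p.2 = true := List.isPrefixOf_iff_prefix.2 hp
      rw [h1, decide_eq_true_eq]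
      exact prefix_iff_map_range.1 hp
    · simp only [decide_eq_false (prefix_iff_map_range.not.1 hp)]
      symm
      rw [← Bool.not_eq_true, List.isPrefixOf_iff_prefix]
      exact hp
  exact Primrec.to₂ hfinal

lemma computable_map_range {α σ : Type*} [Primcodable α] [Primcodable σ] {n : α → ℕ}
    {h : α → ℕ → σ} (hn : Computable n) (hh : Computable₂ h) :
    Computable fun a => (List.range (n a)).map (h a) := by
  have hstep : Computable₂ fun (a : α) (p : ℕ × List σ) => p.2 ++ [h a p.1] :=
    Computable.to₂ (Computable.list_append.comp (Computable.snd.comp Computable.snd)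
      (Computable.list_cons.comp (hh.comp Computable.fst (Computable.fst.comp Computable.snd))
        (Computable.const [])))
  refine (Computable.nat_rec hn (Computable.const ([] : List σ)) hstep).of_eq fun a => ?_
  suffices H : ∀ m, (Nat.rec [] (fun y IH => IH ++ [h a y]) m : List σ) =
      (List.range m).map (h a) from H (n a)
  intro m
  induction m with
  | zero => rfl
  | succ m ih =>
    show (Nat.rec [] _ m : List σ) ++ [h a m] = _
    rw [ih, List.range_succ, List.map_append]
    rfl

lemma map_range_getD (l : List (List Bool)) :
    (List.range l.length).map (fun k => l.getD k []) = l := by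
  apply List.ext_getElem?
  intro i
  by_cases hi : i < l.length
  · rw [List.getElem?_map, List.getElem?_range hi, List.getElem?_eq_getElem hi]
    simp [List.getD_eq_getElem l [] hi, List.getElem?_eq_getElem hi]
  · rw [List.getElem?_eq_none (by simpa using le_of_not_gt hi),
      List.getElem?_eq_none (le_of_not_gt hi)]

lemma map_filterMap_eq_filter (l : List (List Bool)) (p : List Bool → Bool) :
    ((l.map fun τ => (τ, p τ)).filterMap fun q => bif q.2 then some q.1 else none) =
      l.filter p := by
  induction l with
  | nil => rfl
  | cons a t ih =>
    simp only [List.map_cons, List.filterMap_cons, List.filter_cons]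
    cases hpa : p a <;> simp [ih]

end CIOTaux

namespace CIOTaux

lemma closed_pre_eq (N : ℕ) (c : List Bool) : IsClosed {z : ℕ → Bool | pre z N = c} := by
  by_cases hc : c.length = N
  · have : {z : ℕ → Bool | pre z N = c} =
        ⋂ i ∈ Finset.range N, {z : ℕ → Bool | z i = c.getD i false} := by
      ext z
      simp only [Set.mem_setOf_eq, Set.mem_iInter, Finset.mem_range]
      constructor
      · intro h i hi
        have h1 : (pre z N)[i]? = some (z i) := pre_getElem? hi
        rw [h] at h1
        rw [List.getD_eq_getElem?_getD, h1]
        rfl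
      · intro h
        apply List.ext_getElem?
        intro i
        by_cases hi : i < N
        · rw [pre_getElem? hi, h i hi,
            List.getD_eq_getElem c false (by rw [hc]; exact hi),
            List.getElem?_eq_getElem (by rw [hc]; exact hi)]
        · rw [List.getElem?_eq_none (by rw [pre_length]; exact le_of_not_gt hi),
            List.getElem?_eq_none (by rw [hc]; exact le_of_not_gt hi)]
    rw [this]
    refine isClosed_biInter fun i _ => ?_
    have heq : {z : ℕ → Bool | z i = c.getD i false} =
        (fun z : ℕ → Bool => z i) ⁻¹' {c.getD i false} := rfl
    rw [heq]
    exact (isClosed_discrete _).preimage (continuous_apply i)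
  · have : {z : ℕ → Bool | pre z N = c} = ∅ := by
      ext z
      simp only [Set.mem_setOf_eq, Set.mem_empty_iff_false, iff_false]
      intro h
      apply hc
      rw [← h, pre_length]
    rw [this]
    exact isClosed_empty

end CIOTaux


open CIOTaux in
/-- Computable inversion of a computable injection on a computable closed set:
if `P` is a computable tree with nonempty path set `[P]`, `fhat` is a
computable monotone length-bounded representation whose lengths tend to
infinity along every path, `f` is the induced map on `[P]` (characterized by
`fhat(x↾n) ≺ f(x)`), and `f` is injective on `[P]`, then there is a
computable `ghat` such that for every `x ∈ [P]`: each `ghat(f(x)↾s)` is a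
prefix of `x`, and the lengths `|ghat(f(x)↾s)|` tend to infinity — hence the
induced map `g` satisfies `g(f(x)) = x` on `[P]`. -/
theorem computable_inversion_of_injection_on_tree
    (P : List Bool → Bool) (hPcomp : Computable P)
    (hPtree : ∀ σ τ : List Bool, σ <+: τ → P τ = true → P σ = true)
    (hPne : ∃ x : ℕ → Bool, ∀ n, P (pre x n) = true)
    (fhat : List Bool → List Bool) (hfcomp : Computable fhat)
    (hfmono : ∀ σ τ : List Bool, σ <+: τ → fhat σ <+: fhat τ)
    (hflen : ∀ σ : List Bool, (fhat σ).length ≤ σ.length)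
    (hftend : ∀ x : ℕ → Bool, (∀ n, P (pre x n) = true) →
      Tendsto (fun n => (fhat (pre x n)).length) atTop atTop)
    (f : (ℕ → Bool) → (ℕ → Bool))
    (hf : ∀ x : ℕ → Bool, (∀ n, P (pre x n) = true) →
      ∀ n, pre (f x) ((fhat (pre x n)).length) = fhat (pre x n))
    (hinj : ∀ x z : ℕ → Bool, (∀ n, P (pre x n) = true) →
      (∀ n, P (pre z n) = true) → f x = f z → x = z) :
    ∃ ghat : List Bool → List Bool, Computable ghat ∧
      ∀ x : ℕ → Bool, (∀ n, P (pre x n) = true) →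
        (∀ s, pre x ((ghat (pre (f x) s)).length) = ghat (pre (f x) s)) ∧
        Tendsto (fun s => (ghat (pre (f x) s)).length) atTop atTop := by
  classical
  set L : List Bool → List (List Bool) :=
    fun ρ => (enum ρ.length).filter (fun τ => P τ && (fhat τ).isPrefixOf ρ) with hL
  refine ⟨fun ρ => lcpAll (L ρ), ?_, ?_⟩
  · -- computability of ghat
    have hn : Computable fun ρ : List Bool => (enum ρ.length).length :=
      (Primrec.list_length.comp (primrec_enum.comp Primrec.list_length)).to_comp
    have hτ : Computable fun p : List Bool × ℕ => (enum p.1.length).getD p.2 [] :=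
      ((Primrec.list_getD ([] : List Bool)).comp
        (primrec_enum.comp (Primrec.list_length.comp Primrec.fst)) Primrec.snd).to_comp
    have hb1 : Computable fun p : List Bool × ℕ => P ((enum p.1.length).getD p.2 []) :=
      hPcomp.comp hτ
    have hb2 : Computable fun p : List Bool × ℕ =>
        (fhat ((enum p.1.length).getD p.2 [])).isPrefixOf p.1 :=
      primrec₂_isPrefixOf.to_comp.comp (hfcomp.comp hτ) Computable.fst
    have hbool : Computable fun p : List Bool × ℕ =>
        P ((enum p.1.length).getD p.2 []) &&
          (fhat ((enum p.1.length).getD p.2 [])).isPrefixOf p.1 := by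
      refine (Computable.cond hb1 hb2 (Computable.const false)).of_eq fun p => ?_
      cases P ((enum p.1.length).getD p.2 []) <;> simp
    have hh : Computable₂ fun (ρ : List Bool) (k : ℕ) =>
        ((enum ρ.length).getD k [],
          P ((enum ρ.length).getD k []) && (fhat ((enum ρ.length).getD k [])).isPrefixOf ρ) :=
      Computable.to₂ (hτ.pair hbool)
    have hmap := computable_map_range hn hh
    have hfix : Primrec fun l : List (List Bool × Bool) =>
        lcpAll (l.filterMap fun q => bif q.2 then some q.1 else none) :=
      primrec_lcpAll.comp (Primrec.listFilterMap Primrec.id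
        (Primrec.to₂ (Primrec.cond (Primrec.snd.comp Primrec.snd)
          (Primrec.option_some.comp (Primrec.fst.comp Primrec.snd)) (Primrec.const none))))
    refine (hfix.to_comp.comp hmap).of_eq fun ρ => ?_
    congr 1
    rw [hL]
    have e1 : (List.range (enum ρ.length).length).map
        (fun k => ((enum ρ.length).getD k [],
          P ((enum ρ.length).getD k []) && (fhat ((enum ρ.length).getD k [])).isPrefixOf ρ))
      = (enum ρ.length).map (fun τ => (τ, P τ && (fhat τ).isPrefixOf ρ)) := by
      conv_rhs => rw [← map_range_getD (enum ρ.length)]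
      rw [List.map_map]
      rfl
    rw [e1, map_filterMap_eq_filter]
  intro x hx
  -- x↾s is always a candidate
  have hmemL : ∀ s, pre x s ∈ L (pre (f x) s) := by
    intro s
    rw [hL, List.mem_filter]
    refine ⟨mem_enum.2 (by rw [pre_length, pre_length]), ?_⟩
    have h1 : fhat (pre x s) <+: pre (f x) s := by
      rw [← hf x hx s]
      exact pre_prefix_of_le (le_trans (hflen _) (le_of_eq (pre_length x s)))
    simp [hx s, List.isPrefixOf_iff_prefix, h1]
  constructor
  · intro s
    exact (eq_pre_of_prefix (lcpAll_prefix (hmemL s))).symm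
  · rw [Filter.tendsto_atTop]
    intro n
    rw [Filter.eventually_atTop]
    -- main claim
    have claim : ∃ s₀, ∀ s ≥ s₀, ∀ τ ∈ L (pre (f x) s), pre x n <+: τ := by
      by_contra hcon
      push_neg at hcon
      -- compactness setup
      set V : ℕ → Set (ℕ → Bool) := fun m =>
        {z | pre z n ≠ pre x n ∧ ∀ k ≤ m, P (pre z k) = true ∧
          pre (f x) ((fhat (pre z k)).length) = fhat (pre z k)} with hV
      have hdec : ∀ m, V (m + 1) ⊆ V m := by
        intro m z hz
        exact ⟨hz.1, fun k hk => hz.2 k (le_trans hk (Nat.le_succ m))⟩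
      have hne : ∀ m, (V m).Nonempty := by
        intro m
        obtain ⟨s, hs, τ, hτL, hτp⟩ := hcon (n + m + 1)
        rw [hL, List.mem_filter] at hτL
        obtain ⟨hτe, hτb⟩ := hτL
        have hτlen : τ.length = s := by
          have := mem_enum.1 hτe; rwa [pre_length] at this
        rw [Bool.and_eq_true] at hτb
        have hPτ : P τ = true := hτb.1
        have hfτ : fhat τ <+: pre (f x) s := List.isPrefixOf_iff_prefix.1 hτb.2
        set z : ℕ → Bool := fun i => τ.getD i false with hz
        have hpz : ∀ k ≤ s, pre z k = τ.take k := fun k hk =>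
          pre_ofExt (by rw [hτlen]; exact hk)
        have hns : n ≤ s := le_trans (by omega) hs
        have hms : m ≤ s := le_trans (by omega) hs
        refine ⟨z, ?_, ?_⟩
        · rw [hpz n hns]
          intro h
          exact hτp (h ▸ List.take_prefix n τ)
        · intro k hk
          have hks : k ≤ s := le_trans hk hms
          rw [hpz k hks]
          refine ⟨hPtree _ _ (List.take_prefix k τ) hPτ, ?_⟩
          have h2 : fhat (τ.take k) <+: pre (f x) s :=
            (hfmono _ _ (List.take_prefix k τ)).trans hfτ
          exact (eq_pre_of_prefix h2).symm
      have hclosed : ∀ m, IsClosed (V m) := by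
        intro m
        set N := n + m + 1 with hN
        have hnN : n ≤ N := by omega
        have hVeq : V m = ⋃ c ∈ {c : List Bool | c.length = N ∧ c.take n ≠ pre x n ∧
            ∀ k ≤ m, P (c.take k) = true ∧
              pre (f x) ((fhat (c.take k)).length) = fhat (c.take k)},
            {z : ℕ → Bool | pre z N = c} := by
          ext z
          simp only [Set.mem_iUnion, Set.mem_setOf_eq, hV]
          constructor
          · rintro ⟨h1, h2⟩
            refine ⟨pre z N, ⟨pre_length z N, ?_, ?_⟩, rfl⟩
            · rw [pre_take hnN]; exact h1
            · intro k hk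
              rw [pre_take (by omega : k ≤ N)]; exact h2 k hk
          · rintro ⟨c, ⟨hc1, hc2, hc3⟩, hc4⟩
            constructor
            · rw [← pre_take hnN, hc4]; exact hc2
            · intro k hk
              rw [← pre_take (by omega : k ≤ N), hc4]; exact hc3 k hk
        rw [hVeq]
        apply Set.Finite.isClosed_biUnion
        · apply Set.Finite.subset (List.finite_toSet (enum N))
          intro c hc
          exact mem_enum.2 hc.1
        · intro c _
          exact closed_pre_eq N c
      have hcompact : IsCompact (V 0) := (hclosed 0).isCompact
      obtain ⟨z, hzmem⟩ :=
        IsCompact.nonempty_iInter_of_sequence_nonempty_isCompact_isClosed V hdec hne hcompact hclosed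
      rw [Set.mem_iInter] at hzmem
      have hzne : pre z n ≠ pre x n := (hzmem 0).1
      have hzP : ∀ k, P (pre z k) = true := fun k => ((hzmem k).2 k (le_refl k)).1
      have hzf : ∀ k, pre (f x) ((fhat (pre z k)).length) = fhat (pre z k) :=
        fun k => ((hzmem k).2 k (le_refl k)).2
      have hfz : f z = f x := by
        funext i
        obtain ⟨k, hk⟩ := (Filter.tendsto_atTop.1 (hftend z hzP) (i + 1)).exists
        have h1 : pre (f z) ((fhat (pre z k)).length) = pre (f x) ((fhat (pre z k)).length) := by
          rw [hf z hzP k, hzf k]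
        exact pre_point_eq h1 (by omega)
      have := hinj z x hzP hx (hfz.trans rfl)
      exact hzne (by rw [this])
    obtain ⟨s₀, hs₀⟩ := claim
    refine ⟨s₀, fun s hs => ?_⟩
    have hLne : L (pre (f x) s) ≠ [] := by
      intro h
      have := hmemL s
      rw [h] at this
      exact List.not_mem_nil this
    have hpre : pre x n <+: lcpAll (L (pre (f x) s)) :=
      prefix_lcpAll hLne (hs₀ s hs)
    have := hpre.length_le
    rwa [pre_length] at this
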